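/- Let q = p^k with p prime and k ≥ 1. Any two maps F_q → F_q of the form x ↦ a x^p + b (with a ∈ F_q^*, b ∈ F_q) that have no fixed point in F_q are dynamically equivalent; i.e., among such maps there is exactly one dynamical-equivalence class consisting of maps without fixed points (when such maps exist). -/

import Mathlib

/-!
The map `x ↦ a x ^ p - x` is additive, so if `x ↦ a x ^ p + b` has no fixed point it is not
surjective, hence not injective: some `c ≠ 0` has `a c ^ p = c`, and conjugating by `x ↦ c x`
turns the map into `x ↦ x ^ p + β`, still without fixed points, i.e. with `β` outside the range
of the Artin–Schreier map `℘ x = x ^ p - x`. Over the prime field `℘` is linear with the prime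
field as kernel, so its range is a hyperplane. Hence for two such `β, β'` there are `u ≠ 0` in
the prime field and `v` with `u β - β' = ℘ v`, and `x ↦ u x + v` conjugates `x ^ p + β` to
`x ^ p + β'`.
-/

/-- Two self-maps `f g : α → α` are dynamically equivalent if there is a bijection
`σ : α → α` with `σ⁻¹ ∘ g ∘ σ = f`. -/
def DynEquiv {α : Type*} (f g : α → α) : Prop :=
  ∃ σ : Equiv.Perm α, ∀ x, σ.symm (g (σ x)) = f x

open Module

theorem Submodule.exists_smul_sub_mem_of_finrank_quotient_eq_one {K V : Type*} [DivisionRing K]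
    [AddCommGroup V] [Module K V] {W : Submodule K V} (hW : finrank K (V ⧸ W) = 1) {v : V}
    (hv : v ∉ W) (w : V) : ∃ c : K, c • v - w ∈ W := by
  obtain ⟨c, hc⟩ := (finrank_eq_one_iff_of_nonzero' (W.mkQ v) (by simpa using hv)).1 hW (W.mkQ w)
  exact ⟨c, (Submodule.Quotient.eq W).1 (by simpa using hc)⟩

section ArtinSchreier

variable (F : Type*) [Field F] (p : ℕ) [Fact p.Prime] [CharP F p]

def artinSchreier : F →ₗ[(⊥ : Subfield F)] F where
  toFun x := x ^ p - x
  map_add' x y := by simp only [add_pow_char]; ring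
  map_smul' c x := by
    simp only [Subfield.smul_def, smul_eq_mul, RingHom.id_apply, mul_pow,
      (Subfield.mem_bot_iff_pow_eq_self F p).1 c.2]
    ring

variable {F p}

@[simp] theorem artinSchreier_apply (x : F) : artinSchreier F p x = x ^ p - x := rfl

theorem finrank_ker_artinSchreier :
    finrank (⊥ : Subfield F) (LinearMap.ker (artinSchreier F p)) = 1 := by
  have h1 : (1 : F) ∈ LinearMap.ker (artinSchreier F p) := by simp
  refine (finrank_eq_one_iff_of_nonzero' ⟨1, h1⟩ (by simp)).2 fun ⟨x, hx⟩ => ?_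
  have hx : x ^ p = x := sub_eq_zero.1 hx
  exact ⟨⟨x, (Subfield.mem_bot_iff_pow_eq_self F p).2 hx⟩, by ext; simp [Subfield.smul_def]⟩

theorem finrank_quotient_range_artinSchreier [Finite F] :
    finrank (⊥ : Subfield F) (F ⧸ LinearMap.range (artinSchreier F p)) = 1 := by
  have rank_nullity := (artinSchreier F p).finrank_range_add_finrank_ker
  have quotient_add := (LinearMap.range (artinSchreier F p)).finrank_quotient_add_finrank
  rw [finrank_ker_artinSchreier] at rank_nullity
  omega

theorem mem_range_artinSchreier_iff {β : F} :
    β ∈ LinearMap.range (artinSchreier F p) ↔ ∃ x : F, x ^ p + β = x := by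
  rw [← Submodule.neg_mem_iff]
  refine exists_congr fun x => ?_
  rw [artinSchreier_apply]
  constructor <;> intro h <;> linear_combination h

end ArtinSchreier

namespace DynEquiv

variable {α : Type*} {f g h : α → α}

theorem symm (hfg : DynEquiv f g) : DynEquiv g f := by
  obtain ⟨σ, hσ⟩ := hfg
  refine ⟨σ.symm, fun x => ?_⟩
  rw [Equiv.symm_symm, ← hσ, Equiv.apply_symm_apply, Equiv.apply_symm_apply]

theorem trans (hfg : DynEquiv f g) (hgh : DynEquiv g h) : DynEquiv f h := by
  obtain ⟨σ, hσ⟩ := hfg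
  obtain ⟨τ, hτ⟩ := hgh
  exact ⟨σ.trans τ, fun x => by simp [hτ, hσ]⟩

theorem exists_fixed_iff (hfg : DynEquiv f g) : (∃ x, f x = x) ↔ ∃ x, g x = x := by
  obtain ⟨σ, hσ⟩ := hfg
  refine ⟨fun ⟨x, hx⟩ => ⟨σ x, ?_⟩, fun ⟨y, hy⟩ => ⟨σ.symm y, ?_⟩⟩
  · rwa [← hσ, Equiv.symm_apply_eq] at hx
  · rw [← hσ, Equiv.apply_symm_apply, hy]

end DynEquiv

section FrobeniusAffine

variable {F : Type*} [Field F] (p : ℕ) [Fact p.Prime] [CharP F p]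

theorem dynEquiv_mul_pow_add {a a' b b' : F} (c v : F) (hc : c ≠ 0) (ha : a' * c ^ p = a * c)
    (hb : a' * v ^ p + b' - v = c * b) :
    DynEquiv (fun x => a * x ^ p + b) (fun x => a' * x ^ p + b') := by
  refine ⟨(Equiv.mulLeft₀ c hc).trans (Equiv.addRight v), fun x => ?_⟩
  simp only [Equiv.trans_apply, Equiv.mulLeft₀_apply, Equiv.coe_addRight, Equiv.symm_trans_apply,
    Equiv.addRight_symm, Equiv.mulLeft₀_symm_apply, inv_mul_eq_iff_eq_mul₀ hc]
  rw [add_pow_char, mul_pow]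
  linear_combination x ^ p * ha + hb

theorem exists_ne_zero_mul_pow_eq_self [Finite F] {a b : F} (h : ¬∃ x, a * x ^ p + b = x) :
    ∃ c ≠ 0, a * c ^ p = c := by
  let g : F →+ F := (AddMonoidHom.mulLeft a).comp (frobenius F p).toAddMonoidHom - .id F
  have hg : ∀ x, g x = a * x ^ p - x := fun x => rfl
  have hsurj : ¬Function.Surjective g := fun hs => by
    obtain ⟨x, hx⟩ := hs (-b)
    exact h ⟨x, by linear_combination (hg x).symm.trans hx⟩
  rw [← Finite.injective_iff_surjective, injective_iff_map_eq_zero] at hsurj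
  push Not at hsurj
  obtain ⟨c, hgc, hc⟩ := hsurj
  exact ⟨c, hc, sub_eq_zero.1 ((hg c).symm.trans hgc)⟩

theorem exists_dynEquiv_pow_add [Finite F] {a b : F} (h : ¬∃ x, a * x ^ p + b = x) :
    ∃ β : F, DynEquiv (fun x => x ^ p + β) (fun x => a * x ^ p + b) := by
  obtain ⟨c, hc, hac⟩ := exists_ne_zero_mul_pow_eq_self p h
  have hp0 : (0 : F) ^ p = 0 := zero_pow (Fact.out : p.Prime).ne_zero
  have := dynEquiv_mul_pow_add p (a := 1) (b := c⁻¹ * b) (b' := b) c 0 hc (by rw [hac, one_mul])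
    (by rw [hp0, mul_inv_cancel_left₀ hc]; ring)
  exact ⟨c⁻¹ * b, by simpa using this⟩

theorem dynEquiv_pow_add_of_not_exists_fixed [Finite F] {β β' : F} (h : ¬∃ x, x ^ p + β = x)
    (h' : ¬∃ x, x ^ p + β' = x) : DynEquiv (fun x => x ^ p + β) (fun x => x ^ p + β') := by
  rw [← mem_range_artinSchreier_iff] at h h'
  obtain ⟨u, hu⟩ := Submodule.exists_smul_sub_mem_of_finrank_quotient_eq_one
    finrank_quotient_range_artinSchreier h β'
  obtain ⟨v, hv⟩ := LinearMap.mem_range.1 hu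
  have hu0 : (u : F) ≠ 0 := fun hu0 => h' (by simpa [Subfield.smul_def, hu0] using hu)
  have hup : (u : F) ^ p = u := (Subfield.mem_bot_iff_pow_eq_self F p).1 u.2
  rw [artinSchreier_apply, Subfield.smul_def, smul_eq_mul] at hv
  simpa using dynEquiv_mul_pow_add p (a := 1) (a' := 1) (b := β) (b' := β') (u : F) v hu0
    (by rw [hup]) (by linear_combination hv)

end FrobeniusAffine

theorem stmt11_general {F : Type*} [Field F] [Fintype F] (p k : ℕ) [Fact p.Prime]
    (hq : Fintype.card F = p ^ k) (a a' : Fˣ) (b b' : F)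
    (hfa : ¬∃ x : F, (a : F) * x ^ p + b = x) (hfa' : ¬∃ x : F, (a' : F) * x ^ p + b' = x) :
    DynEquiv (fun x : F => (a : F) * x ^ p + b) (fun x : F => (a' : F) * x ^ p + b') := by
  have : CharP F p := charP_of_card_eq_prime_pow hq
  obtain ⟨β, hβ⟩ := exists_dynEquiv_pow_add p hfa
  obtain ⟨β', hβ'⟩ := exists_dynEquiv_pow_add p hfa'
  have hmid := dynEquiv_pow_add_of_not_exists_fixed p (β := β) (β' := β')
    (hβ.exists_fixed_iff.not.2 hfa) (hβ'.exists_fixed_iff.not.2 hfa')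
  exact (hβ.symm.trans hmid).trans hβ'

theorem stmt11 {F : Type*} [Field F] [Fintype F] (p k : ℕ) [Fact p.Prime] (hk : 1 ≤ k)
    (hq : Fintype.card F = p ^ k) (a a' : Fˣ) (b b' : F)
    (hfa : ¬∃ x : F, (a : F) * x ^ p + b = x) (hfa' : ¬∃ x : F, (a' : F) * x ^ p + b' = x) :
    DynEquiv (fun x : F => (a : F) * x ^ p + b) (fun x : F => (a' : F) * x ^ p + b') :=
  stmt11_general p k hq a a' b b' hfa hfa'
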